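/- arXiv:2008.01900 — 4 statements merged into one kernel-verified Lean document; each statement's English description precedes it below -/
import Mathlib

section
/- If x : ℝ → ℝ is three times continuously differentiable with bounded third derivative, then the 4-instant forward difference formula (2x(t+τ) - 3x(t) + 2x(t-τ) - x(t-2τ))/(2τ) approximates ẋ(t) with truncation error O(τ²). -/
/-!
The weights `(2, -3, 2, -1) / (2τ)` at `t + τ, t, t - τ, t - 2τ` differentiate every quadratic
exactly. Hence, after subtracting the second-order Taylor polynomial at `t` from each sample, only
the Lagrange remainders `x⁽³⁾(ξ) h³ / 6` (with `h = τ, -τ, -2τ`) survive, and their weighted sum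
is at most `(2 + 2 + 8) M τ³ / 6 = 2 M τ³`; dividing by `2τ` gives the bound with `C = 1`.
-/

open Set Finset Nat

theorem taylorWithinEval_uIcc_eq_sum {f : ℝ → ℝ} {n : ℕ} (hf : ContDiff ℝ n f) {x₀ x : ℝ}
    (hx : x₀ ≠ x) :
    taylorWithinEval f n (uIcc x₀ x) x₀ x =
      ∑ k ∈ range (n + 1), (k ! : ℝ)⁻¹ * (x - x₀) ^ k * iteratedDeriv k f x₀ := by
  rw [taylor_within_apply]
  refine sum_congr rfl fun k hk => ?_
  rw [smul_eq_mul, iteratedDerivWithin_eq_iteratedDeriv (uniqueDiffOn_uIcc hx)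
    ((hf.of_le (by exact_mod_cast mem_range_succ_iff.mp hk)).contDiffAt) left_mem_uIcc]

theorem abs_sub_taylor_sum_le {f : ℝ → ℝ} {n : ℕ} (hf : ContDiff ℝ (n + 1) f) (x₀ x : ℝ)
    {M : ℝ} (hM : ∀ y ∈ uIcc x₀ x, |iteratedDeriv (n + 1) f y| ≤ M) :
    |f x - ∑ k ∈ range (n + 1), (k ! : ℝ)⁻¹ * (x - x₀) ^ k * iteratedDeriv k f x₀| ≤
      M * |x - x₀| ^ (n + 1) / (n + 1)! := by
  rcases eq_or_ne x₀ x with rfl | hx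
  · simp [sum_range_succ']
  obtain ⟨y, hy, hrem⟩ := taylor_mean_remainder_lagrange_iteratedDeriv hx hf.contDiffOn
  rw [← taylorWithinEval_uIcc_eq_sum (hf.of_le (by exact_mod_cast n.le_succ)) hx, hrem,
    abs_div, abs_mul, abs_pow, Nat.abs_cast]
  gcongr
  exact hM y (uIoo_subset_uIcc_self hy)

theorem abs_quadratic_taylor_sub_le {f : ℝ → ℝ} (hf : ContDiff ℝ 3 f) (t h : ℝ) {M : ℝ}
    (hM : ∀ y ∈ uIcc t (t + h), |iteratedDeriv 3 f y| ≤ M) :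
    |f (t + h) - (f t + h * deriv f t + h ^ 2 / 2 * iteratedDeriv 2 f t)| ≤ M * |h| ^ 3 / 6 := by
  have := abs_sub_taylor_sum_le (n := 2) hf t (t + h) hM
  simp only [sum_range_succ, range_zero, sum_empty, iteratedDeriv_zero,
    iteratedDeriv_one, add_sub_cancel_left] at this
  norm_num [Nat.factorial] at this
  convert this using 3
  ring

theorem abs_four_instant_sub_le {x : ℝ → ℝ} {t τ d₁ d₂ M : ℝ} (hτ : 0 < τ)
    (htaylor : ∀ h ∈ ({τ, -τ, -(2 * τ)} : Set ℝ),
      |x (t + h) - (x t + h * d₁ + h ^ 2 / 2 * d₂)| ≤ M * |h| ^ 3 / 6) :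
    |(2 * x (t + τ) - 3 * x t + 2 * x (t - τ) - x (t - 2 * τ)) / (2 * τ) - d₁| ≤ M * τ ^ 2 := by
  have h2τ : 0 < 2 * τ := by linarith
  have hp := htaylor τ (by simp)
  have hm := htaylor (-τ) (by simp)
  have hmm := htaylor (-(2 * τ)) (by simp)
  rw [abs_of_pos hτ] at hp
  rw [abs_neg, abs_of_pos hτ, ← sub_eq_add_neg] at hm
  rw [abs_neg, abs_of_pos h2τ, ← sub_eq_add_neg] at hmm
  rw [abs_le] at hp hm hmm ⊢
  rw [div_sub' h2τ.ne', le_div_iff₀ h2τ, div_le_iff₀ h2τ]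
  constructor
  · linarith
  · linarith

theorem four_instant_forward_difference_truncation_error :
    ∃ C : ℝ, 0 < C ∧ ∀ (x : ℝ → ℝ) (t τ M : ℝ), ContDiff ℝ 3 x → 0 < τ →
      (∀ s ∈ Set.Icc (t - 2 * τ) (t + τ), |iteratedDeriv 3 x s| ≤ M) →
      |(2 * x (t + τ) - 3 * x t + 2 * x (t - τ) - x (t - 2 * τ)) / (2 * τ) -
          deriv x t| ≤ C * M * τ ^ 2 := by
  refine ⟨1, one_pos, fun x t τ M hx hτ hM => ?_⟩
  rw [one_mul]
  refine abs_four_instant_sub_le hτ fun h hh => abs_quadratic_taylor_sub_le hx t h fun y hy => ?_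
  have ht : t + h ∈ Icc (t - 2 * τ) (t + τ) := by
    rcases hh with rfl | rfl | rfl <;> constructor <;> linarith
  exact hM y (uIcc_subset_Icc ⟨by linarith, by linarith⟩ ht hy)
end

section
/- If x : ℝ → ℝ is four times continuously differentiable with bounded fourth derivative, then the 5-IFD formula (8x(t+τ) + x(t) - 6x(t-τ) - 5x(t-2τ) + 2x(t-3τ))/(18τ) approximates ẋ(t) with truncation error O(τ³). -/
/-!
The weights `8, 1, -6, -5, 2` at the nodes `t + kτ`, `k = 1, 0, -1, -2, -3`, have moments
`∑ wₖ kʲ = 0, 18, 0, 0` for `j = 0, 1, 2, 3`, so the 5-IFD formula returns the exact derivative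
of every cubic. Applied to `x`, it therefore only sees the Lagrange remainder of the cubic Taylor
polynomial at `t`, which is at most `M (kτ)⁴ / 24` at each node; summing gives
`(8 + 6 + 5·16 + 2·81) M τ⁴ / (24 · 18 τ) = 16/27 · M τ³`.
-/

open Set Nat

theorem taylorWithinEval_eq_univ {f : ℝ → ℝ} {n : ℕ} {s : Set ℝ} {x₀ : ℝ}
    (hf : ContDiffAt ℝ n f x₀) (hs : UniqueDiffOn ℝ s) (hx₀ : x₀ ∈ s) :
    taylorWithinEval f n s x₀ = taylorWithinEval f n univ x₀ := by
  ext x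
  simp only [taylor_within_apply, iteratedDerivWithin_univ]
  refine Finset.sum_congr rfl fun k hk => ?_
  have hkn : (k : WithTop ℕ∞) ≤ n := by
    exact_mod_cast Nat.lt_succ_iff.mp (Finset.mem_range.mp hk)
  rw [iteratedDerivWithin_eq_iteratedDeriv hs (hf.of_le hkn) hx₀]

theorem abs_sub_taylorWithinEval_le {f : ℝ → ℝ} {n : ℕ} (hf : ContDiff ℝ (n + 1) f)
    {x₀ x M : ℝ} (hM : ∀ y ∈ uIcc x₀ x, |iteratedDeriv (n + 1) f y| ≤ M) :
    |f x - taylorWithinEval f n univ x₀ x| ≤ M * |x - x₀| ^ (n + 1) / (n + 1)! := by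
  rcases eq_or_ne x₀ x with rfl | hx
  · simp [taylorWithinEval_self]
  obtain ⟨ξ, hξ, hrem⟩ := taylor_mean_remainder_lagrange_iteratedDeriv hx hf.contDiffOn
  rw [← taylorWithinEval_eq_univ (hf.contDiffAt.of_le (by norm_cast; omega))
    (uniqueDiffOn_uIcc hx) left_mem_uIcc, hrem, abs_div, abs_mul, abs_pow, Nat.abs_cast]
  gcongr
  exact hM ξ (uIoo_subset_uIcc_self hξ)

theorem taylorWithinEval_three_univ (f : ℝ → ℝ) (x₀ x : ℝ) :
    taylorWithinEval f 3 univ x₀ x = f x₀ + deriv f x₀ * (x - x₀) +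
      iteratedDeriv 2 f x₀ / 2 * (x - x₀) ^ 2 + iteratedDeriv 3 f x₀ / 6 * (x - x₀) ^ 3 := by
  simp only [taylor_within_apply, Finset.sum_range_succ, Finset.sum_range_zero,
    iteratedDerivWithin_univ, iteratedDeriv_zero, iteratedDeriv_one, smul_eq_mul]
  norm_num [Nat.factorial]
  ring

noncomputable def fiveIFD (x : ℝ → ℝ) (t τ : ℝ) : ℝ :=
  (8 * x (t + τ) + x t - 6 * x (t - τ) - 5 * x (t - 2 * τ) + 2 * x (t - 3 * τ)) / (18 * τ)

theorem fiveIFD_sub (x y : ℝ → ℝ) (t τ : ℝ) :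
    fiveIFD (x - y) t τ = fiveIFD x t τ - fiveIFD y t τ := by
  simp only [fiveIFD, Pi.sub_apply]
  ring

theorem fiveIFD_cubic {τ : ℝ} (hτ : τ ≠ 0) (t a b c d : ℝ) :
    fiveIFD (fun s => a + b * (s - t) + c * (s - t) ^ 2 + d * (s - t) ^ 3) t τ = b := by
  simp only [fiveIFD]
  field_simp
  ring

theorem abs_fiveIFD_le {x : ℝ → ℝ} {t τ K : ℝ} (hτ : 0 < τ)
    (hx : ∀ h ∈ Icc (-3 * τ) τ, |x (t + h)| ≤ K * h ^ 4) :
    |fiveIFD x t τ| ≤ 128 / 9 * K * τ ^ 3 := by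
  have at_node (k : ℝ) (hk : k ∈ Icc (-3 : ℝ) 1) : |x (t + k * τ)| ≤ K * k ^ 4 * τ ^ 4 := by
    have := hx (k * τ) ⟨by nlinarith [hk.1], by nlinarith [hk.2]⟩
    rwa [mul_pow, ← mul_assoc] at this
  have e₁ := abs_le.mp (at_node 1 (by norm_num))
  have e₀ := abs_le.mp (at_node 0 (by norm_num))
  have e₂ := abs_le.mp (at_node (-1) (by norm_num))
  have e₃ := abs_le.mp (at_node (-2) (by norm_num))
  have e₄ := abs_le.mp (at_node (-3) (by norm_num))
  norm_num [← sub_eq_add_neg] at e₀ e₁ e₂ e₃ e₄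
  rw [fiveIFD, abs_div, abs_of_pos (show 0 < 18 * τ by positivity), div_le_iff₀ (by positivity),
    abs_le]
  constructor <;> linarith

theorem five_IFD_truncation_error :
    ∃ C : ℝ, 0 < C ∧ ∀ (x : ℝ → ℝ) (t τ M : ℝ), ContDiff ℝ 4 x → 0 < τ →
      (∀ s ∈ Set.Icc (t - 3 * τ) (t + τ), |iteratedDeriv 4 x s| ≤ M) →
      |(8 * x (t + τ) + x t - 6 * x (t - τ) - 5 * x (t - 2 * τ) +
          2 * x (t - 3 * τ)) / (18 * τ) - deriv x t| ≤ C * M * τ ^ 3 := by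
  refine ⟨16 / 27, by norm_num, fun x t τ M hx hτ hM => ?_⟩
  set P := taylorWithinEval x 3 univ t
  have hP : fiveIFD P t τ = deriv x t := by
    rw [show P = _ from funext (taylorWithinEval_three_univ x t)]
    exact fiveIFD_cubic hτ.ne' t _ _ _ _
  have hrem (h : ℝ) (hh : h ∈ Icc (-3 * τ) τ) : |(x - P) (t + h)| ≤ M / 24 * h ^ 4 := by
    have hsub : uIcc t (t + h) ⊆ Icc (t - 3 * τ) (t + τ) :=
      uIcc_subset_Icc ⟨by linarith, by linarith⟩ ⟨by linarith [hh.1], by linarith [hh.2]⟩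
    have := abs_sub_taylorWithinEval_le (n := 3) hx fun y hy => hM y (hsub hy)
    rw [add_sub_cancel_left, (by decide : Even 4).pow_abs,
      show ((3 + 1)! : ℝ) = 24 by norm_num [Nat.factorial]] at this
    rw [Pi.sub_apply]
    linarith
  calc |fiveIFD x t τ - deriv x t| = |fiveIFD (x - P) t τ| := by rw [← hP, ← fiveIFD_sub]
    _ ≤ 128 / 9 * (M / 24) * τ ^ 3 := abs_fiveIFD_le hτ hrem
    _ = 16 / 27 * M * τ ^ 3 := by ring
end

section
/- Every root of P₄(θ) = θ⁴ + (1/8)θ³ - (3/4)θ² - (5/8)θ + 1/4 over the complex numbers has absolute value at most 1, and θ = 1 is the only root on the unit circle and it is a simple root; hence the associated linear multistep method is 0-stable. -/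
/-!
`P₄(θ) = (θ - 1) q(θ)` with `8 q(θ) = 8θ³ + 9θ² + 3θ - 2`, and every root of `q` lies in
the open unit disk. The real root `r` of `q` lies in `(1/4, 1)`. A non-real root `θ` comes with
its conjugate, so `q(z) = (z² - 2 Re θ · z + |θ|²)(z - r)`, and comparing constant terms gives
`r |θ|² = 1/4`, hence `|θ|² < 1`. Finally `P₄'(1) = 9/4 ≠ 0`, so `1` is a simple root.
-/

open Complex Polynomial

namespace Complex

theorem sq_sub_two_re_mul_add_normSq (θ : ℂ) : θ ^ 2 - 2 * θ.re * θ + normSq θ = 0 := by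
  apply Complex.ext <;> simp [sq, normSq_apply] <;> ring

theorem eq_zero_of_ofReal_mul_add_ofReal_eq_zero {θ : ℂ} (hθ : θ.im ≠ 0) {α β : ℝ}
    (h : α * θ + β = 0) : α = 0 ∧ β = 0 := by
  have him : α * θ.im = 0 := by simpa using congrArg im h
  have hα : α = 0 := (mul_eq_zero.mp him).resolve_right hθ
  refine ⟨hα, ?_⟩
  simpa [hα] using h

/-- Vieta's formulas for a real monic cubic with roots `θ`, `conj θ` and `r`. -/
theorem cubic_real_root_of_nonreal_root {a b c r : ℝ} {θ : ℂ} (hθ : θ.im ≠ 0)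
    (h : θ ^ 3 + a * θ ^ 2 + b * θ + c = 0) (hr : r = -a - 2 * θ.re) :
    r ^ 3 + a * r ^ 2 + b * r + c = 0 ∧ r * normSq θ = -c := by
  set s := normSq θ
  have hquad := sq_sub_two_re_mul_add_normSq θ
  -- The remainder of the cubic modulo `(z - θ)(z - conj θ)`, a real linear polynomial.
  have hrem : ((b - s - 2 * θ.re * r : ℝ) : ℂ) * θ + ((c + s * r : ℝ) : ℂ) = 0 := by
    push_cast [hr]
    linear_combination h - (θ + a + 2 * θ.re) * hquad
  obtain ⟨hlin, hconst⟩ := eq_zero_of_ofReal_mul_add_ofReal_eq_zero hθ hrem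
  constructor
  · linear_combination r * hlin + hconst + r ^ 2 * hr
  · linarith

end Complex

theorem quarter_lt_and_lt_one_of_cubic_eq_zero {r : ℝ}
    (h : 8 * r ^ 3 + 9 * r ^ 2 + 3 * r - 2 = 0) : 1 / 4 < r ∧ r < 1 := by
  constructor
  · nlinarith [sq_nonneg (r + 9 / 16), sq_nonneg (r - 1 / 4)]
  · nlinarith [sq_nonneg (r + 9 / 16)]

theorem norm_lt_one_of_cubic_eq_zero {θ : ℂ} (h : 8 * θ ^ 3 + 9 * θ ^ 2 + 3 * θ - 2 = 0) :
    ‖θ‖ < 1 := by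
  by_cases hθ : θ.im = 0
  · obtain ⟨x, rfl⟩ : ∃ x : ℝ, (x : ℂ) = θ := ⟨θ.re, Complex.ext rfl hθ.symm⟩
    have hx : 8 * x ^ 3 + 9 * x ^ 2 + 3 * x - 2 = 0 := by exact_mod_cast h
    obtain ⟨hlow, hhigh⟩ := quarter_lt_and_lt_one_of_cubic_eq_zero hx
    rw [norm_real, Real.norm_eq_abs, abs_lt]
    constructor <;> linarith
  · set r : ℝ := -(9 / 8) - 2 * θ.re with hr_def
    obtain ⟨hr, hprod⟩ := cubic_real_root_of_nonreal_root (b := 3 / 8) (c := -1 / 4) hθ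
      (by push_cast; linear_combination h / 8) hr_def
    have hr' : 8 * r ^ 3 + 9 * r ^ 2 + 3 * r - 2 = 0 := by linear_combination 8 * hr
    obtain ⟨hlow, -⟩ := quarter_lt_and_lt_one_of_cubic_eq_zero hr'
    have hnormSq : normSq θ < 1 := by nlinarith [normSq_nonneg θ]
    rwa [← sq_lt_one_iff₀ (norm_nonneg θ), ← normSq_eq_norm_sq]

theorem P4_eq_zero_iff (θ : ℂ) :
    θ ^ 4 + (1 / 8) * θ ^ 3 - (3 / 4) * θ ^ 2 - (5 / 8) * θ + 1 / 4 = 0 ↔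
      θ = 1 ∨ 8 * θ ^ 3 + 9 * θ ^ 2 + 3 * θ - 2 = 0 := by
  rw [← sub_eq_zero (a := θ), ← mul_eq_zero]
  exact ⟨fun h => by linear_combination 8 * h, fun h => by linear_combination h / 8⟩

theorem Polynomial.rootMultiplicity_eq_one_of_not_isRoot_derivative {R : Type*} [CommRing R]
    {p : R[X]} {t : R} (hp : p.IsRoot t) (hp' : ¬ p.derivative.IsRoot t) :
    p.rootMultiplicity t = 1 := by
  have hne : p ≠ 0 := by rintro rfl; simp at hp'
  have hpos := (rootMultiplicity_pos hne).mpr hp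
  have hle : ¬ 1 < p.rootMultiplicity t := by
    rw [one_lt_rootMultiplicity_iff_isRoot hne]; tauto
  omega

theorem P4_root_condition_zero_stable :
    (∀ θ : ℂ, θ ^ 4 + (1 / 8) * θ ^ 3 - (3 / 4) * θ ^ 2 - (5 / 8) * θ + 1 / 4 = 0 →
      ‖θ‖ ≤ 1) ∧
    (∀ θ : ℂ, θ ^ 4 + (1 / 8) * θ ^ 3 - (3 / 4) * θ ^ 2 - (5 / 8) * θ + 1 / 4 = 0 →
      ‖θ‖ = 1 → θ = 1) ∧
    (Polynomial.rootMultiplicity (1 : ℂ)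
      (Polynomial.X ^ 4 + Polynomial.C (1 / 8) * Polynomial.X ^ 3 -
        Polynomial.C (3 / 4) * Polynomial.X ^ 2 - Polynomial.C (5 / 8) * Polynomial.X +
        Polynomial.C (1 / 4)) = 1) := by
  refine ⟨fun θ h => ?_, fun θ h hnorm => ?_, ?_⟩
  · rcases (P4_eq_zero_iff θ).mp h with rfl | hq
    · simp
    · exact (norm_lt_one_of_cubic_eq_zero hq).le
  · rcases (P4_eq_zero_iff θ).mp h with h1 | hq
    · exact h1
    · exact absurd hnorm (norm_lt_one_of_cubic_eq_zero hq).ne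
  · apply rootMultiplicity_eq_one_of_not_isRoot_derivative <;> norm_num [IsRoot]
end

section
/- Factoring out the root θ = 1, P₄(θ) = (θ - 1)·Q(θ) where Q(θ) = θ³ + (9/8)θ² + (3/8)θ - 1/4, and every complex root of Q has absolute value strictly less than 1. -/
/-!
The real cubic `Q` has exactly one real root `r`, and `1/4 < r < 1` because `Q ≤ -9/128` on
`(-∞, 1/4]` and `Q > 0` on `[1, ∞)`. A non-real root `θ` comes with its conjugate, and together
with `r` they are all the roots, so by Vieta `|θ|² · r = 1/4`, whence `|θ|² < 1`.
-/

open ComplexConjugate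

theorem cubic_eq_mul_of_roots {K : Type*} [Field K] {a b c u v : K} (huv : u ≠ v)
    (hu : u ^ 3 + a * u ^ 2 + b * u + c = 0) (hv : v ^ 3 + a * v ^ 2 + b * v + c = 0) (z : K) :
    z ^ 3 + a * z ^ 2 + b * z + c = (z - u) * (z - v) * (z - (-a - u - v)) := by
  have hsym : u ^ 2 + u * v + v ^ 2 + a * (u + v) + b = 0 := by
    refine (mul_eq_zero.mp ?_).resolve_left (sub_ne_zero.mpr huv)
    linear_combination hu - hv
  linear_combination hu + (z - u) * hsym

theorem Complex.exists_real_root_normSq_mul_of_cubic_root {a b c : ℝ} {θ : ℂ}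
    (hθ : θ ^ 3 + a * θ ^ 2 + b * θ + c = 0) (hθ_real : conj θ ≠ θ) :
    ∃ s : ℝ, s ^ 3 + a * s ^ 2 + b * s + c = 0 ∧ Complex.normSq θ * s = -c := by
  have hconj : conj θ ^ 3 + a * conj θ ^ 2 + b * conj θ + c = 0 := by
    simpa using congrArg conj hθ
  have hfactor := cubic_eq_mul_of_roots hθ_real.symm hθ hconj
  obtain ⟨s, hs⟩ : ∃ s : ℝ, (s : ℂ) = -a - θ - conj θ :=
    ⟨-a - 2 * θ.re, by
      rw [Complex.ofReal_sub, ← Complex.add_conj]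
      push_cast
      ring⟩
  refine ⟨s, ?_, ?_⟩ <;> apply Complex.ofReal_injective <;> push_cast
  · rw [hfactor, hs]
    ring
  · linear_combination hfactor 0 - (s : ℂ) * Complex.mul_conj θ + θ * conj θ * hs

theorem quarter_lt_and_lt_one_of_Q_root {t : ℝ}
    (ht : t ^ 3 + (9 / 8) * t ^ 2 + (3 / 8) * t - 1 / 4 = 0) : 1 / 4 < t ∧ t < 1 := by
  constructor
  · by_contra! h
    have hquad : 0 ≤ t ^ 2 + 11 / 8 * t + 23 / 32 := by nlinarith [sq_nonneg (t + 11 / 16)]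
    nlinarith [mul_nonpos_of_nonpos_of_nonneg (sub_nonpos.mpr h) hquad]
  · by_contra! h
    nlinarith

theorem P4_factorization_and_Q_roots_in_open_disc :
    (∀ θ : ℂ, θ ^ 4 + (1 / 8) * θ ^ 3 - (3 / 4) * θ ^ 2 - (5 / 8) * θ + 1 / 4 =
      (θ - 1) * (θ ^ 3 + (9 / 8) * θ ^ 2 + (3 / 8) * θ - 1 / 4)) ∧
    (∀ θ : ℂ, θ ^ 3 + (9 / 8) * θ ^ 2 + (3 / 8) * θ - 1 / 4 = 0 →
      ‖θ‖ < 1) := by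
  refine ⟨fun θ => by ring, fun θ hθ => ?_⟩
  by_cases hθ_real : conj θ = θ
  · obtain ⟨t, rfl⟩ := Complex.conj_eq_iff_real.mp hθ_real
    have ht : t ^ 3 + (9 / 8) * t ^ 2 + (3 / 8) * t - 1 / 4 = 0 := by
      apply Complex.ofReal_injective
      push_cast
      exact hθ
    obtain ⟨ht₁, ht₂⟩ := quarter_lt_and_lt_one_of_Q_root ht
    rw [Complex.norm_real, Real.norm_eq_abs, abs_lt]
    constructor <;> linarith
  · obtain ⟨r, hr_root, hvieta⟩ := Complex.exists_real_root_normSq_mul_of_cubic_root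
      (a := 9 / 8) (b := 3 / 8) (c := -1 / 4) (by push_cast; linear_combination hθ) hθ_real
    have hr := (quarter_lt_and_lt_one_of_Q_root (by linear_combination hr_root)).1
    have hnormSq : ‖θ‖ ^ 2 < 1 := by
      rw [← Complex.normSq_eq_norm_sq]
      nlinarith [Complex.normSq_nonneg θ]
    exact (sq_lt_one_iff₀ (norm_nonneg θ)).mp hnormSq
end
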